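/- Let (G,X) be a minimal topological dynamical system and let ψ:(G,X)→(G,K) be a dynamical morphism onto an abelian group t.d.s. (G,K). Then ψ(x) = ψ(y) for every (x,y) ∈ NRP^[1](X); consequently the quotient of X by NRP^[1](X) is the maximal abelian group factor of (G,X). -/

import Mathlib

/-- Generators of the Host–Kra cube group: `[h]_F` for `F` a hyperface `{ω : ω i = a}`. -/
def hyperfaceGens (G : Type*) [Group G] (d : ℕ) : Set ((Fin d → Bool) → G) :=
  {g | ∃ (h : G) (i : Fin d) (a : Bool), g = fun ω => if ω i = a then h else 1}

/-- Generators of the face cube group: `[h]_F` for `F` an upper hyperface `{ω : ω i = 1}`. -/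
def upperFaceGens (G : Type*) [Group G] (d : ℕ) : Set ((Fin d → Bool) → G) :=
  {g | ∃ (h : G) (i : Fin d), g = fun ω => if ω i = true then h else 1}

/-- The Host–Kra cube group `HK^[d]`. -/
def HK (G : Type*) [Group G] (d : ℕ) : Subgroup ((Fin d → Bool) → G) :=
  Subgroup.closure (hyperfaceGens G d)

/-- The face cube group `F^[d]`. -/
def FG (G : Type*) [Group G] (d : ℕ) : Subgroup ((Fin d → Bool) → G) :=
  Subgroup.closure (upperFaceGens G d)

/-- Coordinatewise action of `G^[d]` on `X^[d]`. -/
def cubeAct {G X : Type*} [Group G] [MulAction G X] {d : ℕ}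
    (g : (Fin d → Bool) → G) (c : (Fin d → Bool) → X) : (Fin d → Bool) → X :=
  fun ω => g ω • c ω

/-- The dynamical cubespace `C_G^[d](X)`: the closure of the set of `HK^[d]`-translates
of constant configurations. -/
def cubeSpace (G X : Type*) [Group G] [MulAction G X] [TopologicalSpace X] (d : ℕ) :
    Set ((Fin d → Bool) → X) :=
  closure {c | ∃ g ∈ HK G d, ∃ x : X, c = cubeAct g (fun _ => x)}

/-- The lower corner `⌞^[d](x,y)`: value `y` at `1⃗`, value `x` elsewhere. -/
def lowerCorner {X : Type*} (d : ℕ) (x y : X) : (Fin d → Bool) → X :=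
  fun ω => if ω = (fun _ => true) then y else x

/-- The upper corner `⌝^[d](x,y)`: value `x` at `0⃗`, value `y` elsewhere. -/
def upperCorner {X : Type*} (d : ℕ) (x y : X) : (Fin d → Bool) → X :=
  fun ω => if ω = (fun _ => false) then x else y

/-- The nilpotent regionally proximal relation of order `d`. -/
def NRP (G X : Type*) [Group G] [MulAction G X] [TopologicalSpace X] (d : ℕ) :
    Set (X × X) :=
  {p | lowerCorner (d + 1) p.1 p.2 ∈ cubeSpace G X (d + 1)}

/-- `Y_x^[d](X)`: the closure of the `F^[d]`-orbit of the constant configuration `x^[d]`. -/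
def Yx (G : Type*) {X : Type*} [Group G] [MulAction G X] [TopologicalSpace X]
    (d : ℕ) (x : X) : Set ((Fin d → Bool) → X) :=
  closure {c | ∃ f ∈ FG G d, c = cubeAct f (fun _ => x)}

/-- `C_x^[d](X)`: cubes whose value at `0⃗` is `x`. -/
def Cx (G : Type*) {X : Type*} [Group G] [MulAction G X] [TopologicalSpace X]
    (d : ℕ) (x : X) : Set ((Fin d → Bool) → X) :=
  {c ∈ cubeSpace G X d | c (fun _ => false) = x}

/-!
For a continuous map `ψ : X → K` with `ψ (g • x) = φ g + ψ x`, consider the alternating sum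
`c ↦ ∑_ω (-1)^(number of zeros of ω) ψ (c ω)` over the vertices of a cube. It is continuous, and
on an `HK`-translate of a constant cube it reduces to the alternating sum of `φ` over an element
of `HK`, which vanishes: `φ` is additive, and in dimension at least two each hyperface generator
is constant along some coordinate other than the one defining the face, so its vertices cancel in
pairs. Hence the alternating sum vanishes on the whole cubespace, while on the lower corner
`⌞(x, y)` it equals `ψ y - ψ x`.
-/

open Finset Function

theorem comp_lowerCorner {X Y : Type*} (f : X → Y) (d : ℕ) (x y : X) :
    f ∘ lowerCorner d x y = lowerCorner d (f x) (f y) := by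
  ext ω
  by_cases h : ω = fun _ => true <;> simp [lowerCorner, h]

section AlternatingSum

variable {M : Type*} [AddCommGroup M] {d : ℕ}

def cubeFlip (j : Fin d) (ω : Fin d → Bool) : Fin d → Bool :=
  update ω j (!ω j)

theorem cubeFlip_cubeFlip (j : Fin d) (ω : Fin d → Bool) : cubeFlip j (cubeFlip j ω) = ω := by
  simp [cubeFlip]

theorem cubeFlip_ne (j : Fin d) (ω : Fin d → Bool) : cubeFlip j ω ≠ ω := fun h => by
  simpa [cubeFlip] using congrFun h j

theorem cubeFlip_apply_of_ne {i j : Fin d} (h : i ≠ j) (ω : Fin d → Bool) :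
    cubeFlip j ω i = ω i :=
  update_of_ne h _ _

def cubeSign (ω : Fin d → Bool) : ℤ :=
  ∏ i, if ω i then 1 else -1

@[simp]
theorem cubeSign_true : cubeSign (fun _ : Fin d => true) = 1 := by
  simp [cubeSign]

theorem cubeSign_cubeFlip (j : Fin d) (ω : Fin d → Bool) :
    cubeSign (cubeFlip j ω) = -cubeSign ω := by
  unfold cubeSign
  rw [← mul_prod_erase _ _ (mem_univ j), ← mul_prod_erase _ _ (mem_univ j),
    prod_congr rfl fun i hi => by rw [cubeFlip_apply_of_ne (ne_of_mem_erase hi)]]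
  cases h : ω j <;> simp [cubeFlip, h]

variable (M d) in
def cubeAltSum : ((Fin d → Bool) → M) →+ M where
  toFun c := ∑ ω, cubeSign ω • c ω
  map_zero' := by simp
  map_add' c c' := by simp [smul_add, sum_add_distrib]

theorem cubeAltSum_apply (c : (Fin d → Bool) → M) :
    cubeAltSum M d c = ∑ ω, cubeSign ω • c ω :=
  rfl

theorem cubeAltSum_eq_zero_of_cubeFlip_invariant {c : (Fin d → Bool) → M} (j : Fin d)
    (hc : ∀ ω, c (cubeFlip j ω) = c ω) : cubeAltSum M d c = 0 :=
  sum_ninvolution (cubeFlip j)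
    (fun ω => by rw [hc, cubeSign_cubeFlip, neg_smul, add_neg_cancel])
    (fun ω _ => cubeFlip_ne j ω) (fun _ => mem_univ _) (cubeFlip_cubeFlip j)

theorem cubeAltSum_const (x : M) : cubeAltSum M (d + 1) (fun _ => x) = 0 :=
  cubeAltSum_eq_zero_of_cubeFlip_invariant 0 fun _ => rfl

theorem cubeAltSum_lowerCorner (x y : M) :
    cubeAltSum M (d + 1) (lowerCorner (d + 1) x y) = y - x := by
  have : lowerCorner (d + 1) x y = (fun _ => x) + Pi.single (fun _ => true) (y - x) := by
    ext ω
    by_cases h : ω = fun _ => true <;> simp [lowerCorner, h]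
  rw [this, map_add, cubeAltSum_const, zero_add, cubeAltSum_apply,
    Fintype.sum_eq_single (fun _ => true) fun ω h => by simp [h]]
  simp

end AlternatingSum

section AbelianFactor

variable {G X M : Type*} [Group G] [AddCommGroup M] {d : ℕ}

theorem cubeAltSum_map_eq_zero_of_mem_HK (φ : G → M) (hφ : ∀ g h, φ (g * h) = φ g + φ h)
    {g : (Fin (d + 2) → Bool) → G} (hg : g ∈ HK G (d + 2)) :
    cubeAltSum M (d + 2) (fun ω => φ (g ω)) = 0 := by
  have hφ_one : φ 1 = 0 := by simpa using hφ 1 1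
  have hφ_inv (g : G) : φ g⁻¹ = -φ g :=
    eq_neg_of_add_eq_zero_right (by rw [← hφ, mul_inv_cancel, hφ_one])
  induction hg using Subgroup.closure_induction with
  | mem g hg =>
    obtain ⟨h, i, a, rfl⟩ := hg
    obtain ⟨j, hji⟩ := exists_ne i
    exact cubeAltSum_eq_zero_of_cubeFlip_invariant j fun ω => by
      simp only [cubeFlip_apply_of_ne hji.symm]
  | one =>
    simp only [Pi.one_apply, hφ_one]
    exact map_zero _
  | mul g g' _ _ hg hg' =>
    simp only [Pi.mul_apply, hφ]
    exact (map_add (cubeAltSum M _) (fun ω => φ (g ω)) fun ω => φ (g' ω)).trans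
      (by simp [hg, hg'])
  | inv g _ hg =>
    simp only [Pi.inv_apply, hφ_inv]
    exact (map_neg (cubeAltSum M _) fun ω => φ (g ω)).trans (by simp [hg])

variable [TopologicalSpace X] [MulAction G X] [TopologicalSpace M] [IsTopologicalAddGroup M]
  [T2Space M]

theorem cubeAltSum_comp_eq_zero_of_mem_cubeSpace (φ : G → M)
    (hφ : ∀ g h, φ (g * h) = φ g + φ h) {ψ : X → M} (hψ : Continuous ψ)
    (hψφ : ∀ g x, ψ (g • x) = φ g + ψ x) {c : (Fin (d + 2) → Bool) → X}
    (hc : c ∈ cubeSpace G X (d + 2)) : cubeAltSum M (d + 2) (ψ ∘ c) = 0 := by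
  have hcont : Continuous fun c : (Fin (d + 2) → Bool) → X => cubeAltSum M (d + 2) (ψ ∘ c) := by
    simp only [cubeAltSum_apply]
    fun_prop
  refine closure_minimal ?_ (isClosed_eq hcont continuous_const) hc
  rintro _ ⟨g, hg, z, rfl⟩
  have : ψ ∘ cubeAct g (fun _ => z) = (fun ω => φ (g ω)) + fun _ => ψ z := by
    ext ω
    exact hψφ _ _
  rw [Set.mem_ofPred_eq, this, map_add, cubeAltSum_map_eq_zero_of_mem_HK φ hφ hg,
    cubeAltSum_const, add_zero]

theorem eq_of_mem_NRP_of_continuous_equivariant (φ : G → M)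
    (hφ : ∀ g h, φ (g * h) = φ g + φ h) {ψ : X → M} (hψ : Continuous ψ)
    (hψφ : ∀ g x, ψ (g • x) = φ g + ψ x) {x y : X} (h : (x, y) ∈ NRP G X (d + 1)) :
    ψ x = ψ y := by
  have := cubeAltSum_comp_eq_zero_of_mem_cubeSpace φ hφ hψ hψφ h
  rw [comp_lowerCorner, cubeAltSum_lowerCorner, sub_eq_zero] at this
  exact this.symm

end AbelianFactor

theorem NRP_one_collapsed_by_abelian_factor_general
    {G X : Type*} [Group G] [TopologicalSpace X] [MulAction G X]
    {K : Type*} [AddCommGroup K] [TopologicalSpace K] [IsTopologicalAddGroup K] [T2Space K]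
    [MulAction G K]
    (φ : G → K) (hhom : ∀ g h : G, φ (g * h) = φ g + φ h)
    (hact : ∀ (g : G) (k : K), g • k = φ g + k)
    (ψ : X → K) (hcont : Continuous ψ)
    (hequiv : ∀ (g : G) (x : X), ψ (g • x) = g • ψ x) :
    ∀ x y : X, (x, y) ∈ NRP G X 1 → ψ x = ψ y :=
  fun _ _ h => eq_of_mem_NRP_of_continuous_equivariant (d := 0) φ hhom hcont
    (fun g z => by rw [hequiv, hact]) h

/-- Any factor map from a minimal system onto an abelian group t.d.s. collapses
`NRP^[1](X)`; consequently `X/NRP^[1](X)` is the maximal abelian group factor. -/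
theorem NRP_one_collapsed_by_abelian_factor
    {G X : Type*} [Group G] [TopologicalSpace G] [IsTopologicalGroup G]
    [TopologicalSpace X] [CompactSpace X] [T2Space X]
    [MulAction G X] [ContinuousSMul G X]
    {K : Type*} [AddCommGroup K] [TopologicalSpace K] [IsTopologicalAddGroup K]
    [CompactSpace K] [T2Space K]
    [MulAction G K] [ContinuousSMul G K]
    (hmin : ∀ x : X, Dense (MulAction.orbit G x))
    (φ : G → K) (hhom : ∀ g h : G, φ (g * h) = φ g + φ h)
    (hφcont : Continuous φ)
    (hact : ∀ (g : G) (k : K), g • k = φ g + k)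
    (ψ : X → K) (hcont : Continuous ψ) (hsurj : Function.Surjective ψ)
    (hequiv : ∀ (g : G) (x : X), ψ (g • x) = g • ψ x) :
    ∀ x y : X, (x, y) ∈ NRP G X 1 → ψ x = ψ y :=
  NRP_one_collapsed_by_abelian_factor_general φ hhom hact ψ hcont hequiv
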